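/- Let f: {0,1}^n → {0,1} and T ⊆ [n] with Var_{[n]\T}(f) ≤ cε for ε > 0 and c ∈ (0, 1/8). Then for w chosen uniformly from {0,1}^{[n]\T}, Pr_w[ distance(f_{T,w}, f) ≥ ε/2 ] ≤ 8c. -/

import Mathlib

open Finset
open scoped Classical

variable {n : ℕ}

/-- Combine `z` (on coordinates in `T`) with `w` (outside `T`). -/
def combine (T : Finset (Fin n)) (z w : Fin n → Bool) : Fin n → Bool :=
  fun i => if i ∈ T then z i else w i

/-- `p_z`: probability over uniform `w` that `f(z_T ∘ w) = 1`. -/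
noncomputable def pz (f : (Fin n → Bool) → Bool) (T : Finset (Fin n)) (z : Fin n → Bool) : ℝ :=
  ((Finset.univ.filter (fun w : Fin n → Bool => f (combine T z w) = true)).card : ℝ) / 2 ^ n

/-- `Var_{[n]\T}(f) = E_z[ p_z (1 - p_z) ]`. -/
noncomputable def varNT (f : (Fin n → Bool) → Bool) (T : Finset (Fin n)) : ℝ :=
  (∑ z : Fin n → Bool, pz f T z * (1 - pz f T z)) / 2 ^ n

/-- Normalized Hamming distance between Boolean functions. -/
noncomputable def dist01 (f g : (Fin n → Bool) → Bool) : ℝ :=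
  ((Finset.univ.filter (fun x : Fin n → Bool => f x ≠ g x)).card : ℝ) / 2 ^ n

/-- Partial order w.r.t. directions `B` (`true` = up, `false` = down). -/
def precB (B : Fin n → Bool) (x y : Fin n → Bool) : Prop :=
  ∀ i, if B i = true then x i ≤ y i else y i ≤ x i

/-- `f` is monotone with respect to the directions `B`. -/
def MonotoneWrt (f : (Fin n → Bool) → Bool) (B : Fin n → Bool) : Prop :=
  ∀ x y, precB B x y → f x ≤ f y

/-- `f` is unate: monotone w.r.t. some directions. -/
def Unate (f : (Fin n → Bool) → Bool) : Prop := ∃ B, MonotoneWrt f B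

/-- Fiber-wise majority of `f` over `T` (ties broken toward 0). -/
noncomputable def majT (f : (Fin n → Bool) → Bool) (T : Finset (Fin n)) : (Fin n → Bool) → Bool :=
  fun z => if 1 / 2 < pz f T z then true else false

/-- Restriction of `f` fixing the coordinates outside `T` to `w`. -/
def fRes (f : (Fin n → Bool) → Bool) (T : Finset (Fin n)) (w : Fin n → Bool) :
    (Fin n → Bool) → Bool := fun x => f (combine T x w)

/-- Hamming distance between points of the cube. -/
def ham (x y : Fin n → Bool) : ℕ := (Finset.univ.filter (fun i => x i ≠ y i)).card

/-!
Let `Maj` be the fiber-wise majority of `f` over `T`. On the fiber of `z` it disagrees with `f`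
on a `min(p_z, 1 - p_z) ≤ 2 p_z (1 - p_z)` fraction of points, so `distance(f, Maj) ≤ 2 Var ≤ 2cε`.
Since `Maj` depends only on the coordinates in `T`, averaging `distance(f_{T,w}, Maj)` over `w`
gives back `distance(f, Maj)`. A `w` with `distance(f_{T,w}, f) ≥ ε/2` has
`distance(f_{T,w}, Maj) ≥ ε/2 - 2cε ≥ ε/4` by the triangle inequality, and Markov's inequality
bounds the fraction of such `w` by `2cε / (ε/4) = 8c`.
-/

lemma combine_combine (T : Finset (Fin n)) (z w w' : Fin n → Bool) :
    combine T (combine T z w) w' = combine T z w' := by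
  funext i
  simp only [combine]
  split <;> rfl

def combineSwap (T : Finset (Fin n)) : Equiv.Perm ((Fin n → Bool) × (Fin n → Bool)) :=
  Function.Involutive.toPerm (fun p => (combine T p.1 p.2, combine T p.2 p.1)) fun p => by
    ext i <;> simp only [combine] <;> split <;> rfl

lemma sum_sum_combine {M : Type*} [AddCommMonoid M] (T : Finset (Fin n))
    (φ : (Fin n → Bool) → M) :
    ∑ z, ∑ w, φ (combine T z w) = 2 ^ n • ∑ y, φ y := by
  calc ∑ z, ∑ w, φ (combine T z w) = ∑ p, φ (combineSwap T p).1 := by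
        rw [Fintype.sum_prod_type]; rfl
    _ = ∑ p : (Fin n → Bool) × (Fin n → Bool), φ p.1 :=
        Equiv.sum_comp (combineSwap T) fun p => φ p.1
    _ = 2 ^ n • ∑ y, φ y := by
        simp [Fintype.sum_prod_type, sum_const, smul_sum]

section Fibers

variable (f : (Fin n → Bool) → Bool) (T : Finset (Fin n))

lemma pz_combine (z w : Fin n → Bool) : pz f T (combine T z w) = pz f T z := by
  simp only [pz, combine_combine]

lemma majT_combine (z w : Fin n → Bool) : majT f T (combine T z w) = majT f T z := by
  simp only [majT, pz_combine]

lemma pz_nonneg (z : Fin n → Bool) : 0 ≤ pz f T z := by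
  unfold pz; positivity

lemma pz_le_one (z : Fin n → Bool) : pz f T z ≤ 1 := by
  rw [pz, div_le_one (by positivity)]
  exact_mod_cast (card_filter_le _ _).trans (by simp)

lemma card_fiber_ne_majT_div (z : Fin n → Bool) :
    (#{w | f (combine T z w) ≠ majT f T z} : ℝ) / 2 ^ n = min (pz f T z) (1 - pz f T z) := by
  have hcard :
      (#{w | f (combine T z w) = true} : ℝ) + #{w | ¬f (combine T z w) = true} = 2 ^ n :=
    mod_cast (card_filter_add_card_filter_not _).trans (by simp)
  by_cases hp : 1 / 2 < pz f T z
  · have hmaj : majT f T z = true := if_pos hp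
    simp only [hmaj, ne_eq]
    rw [min_eq_right (by linarith), pz, eq_sub_iff_add_eq, ← add_div, add_comm, hcard,
      div_self (by positivity)]
  · have hmaj : majT f T z = false := if_neg hp
    simp only [hmaj, ne_eq, Bool.not_eq_false]
    rw [min_eq_left (by linarith), pz]

end Fibers

lemma min_le_two_mul_mul_one_sub {p : ℝ} (h0 : 0 ≤ p) (h1 : p ≤ 1) :
    min p (1 - p) ≤ 2 * p * (1 - p) := by
  rcases le_total p (1 - p) with h | h
  · rw [min_eq_left h]; nlinarith
  · rw [min_eq_right h]; nlinarith

lemma dist01_eq_sum (g h : (Fin n → Bool) → Bool) :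
    dist01 g h = (∑ x, if g x ≠ h x then (1 : ℝ) else 0) / 2 ^ n := by
  rw [dist01, sum_boole]

lemma dist01_nonneg (g h : (Fin n → Bool) → Bool) : 0 ≤ dist01 g h := by
  unfold dist01; positivity

lemma dist01_comm (g h : (Fin n → Bool) → Bool) : dist01 g h = dist01 h g := by
  simp only [dist01, ne_comm]

lemma dist01_triangle (g h k : (Fin n → Bool) → Bool) :
    dist01 g k ≤ dist01 g h + dist01 h k := by
  simp only [dist01, ← add_div]
  gcongr
  calc (#{x | g x ≠ k x} : ℝ)
        ≤ #(univ.filter (fun x => g x ≠ h x) ∪ univ.filter (fun x => h x ≠ k x)) := by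
        gcongr
        intro x
        simp only [mem_filter, mem_union, mem_univ, true_and]
        grind
    _ ≤ #{x | g x ≠ h x} + #{x | h x ≠ k x} := mod_cast card_union_le _ _

lemma sum_dist01_fRes (f g : (Fin n → Bool) → Bool) (T : Finset (Fin n))
    (hg : ∀ z w, g (combine T z w) = g z) :
    ∑ w, dist01 (fRes f T w) g = 2 ^ n * dist01 f g := by
  have hsum := sum_sum_combine T fun y => if f y ≠ g y then (1 : ℝ) else 0
  simp only [hg, nsmul_eq_mul, Nat.cast_pow, Nat.cast_ofNat] at hsum
  rw [dist01_eq_sum, mul_div_assoc', ← hsum, sum_comm, sum_div]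
  exact sum_congr rfl fun w _ => dist01_eq_sum _ _

section Majority

variable (f : (Fin n → Bool) → Bool) (T : Finset (Fin n))

lemma sum_dist01_fRes_majT :
    ∑ w, dist01 (fRes f T w) (majT f T) = ∑ z, min (pz f T z) (1 - pz f T z) := by
  simp only [dist01_eq_sum, ← sum_div]
  rw [sum_comm, sum_div]
  refine sum_congr rfl fun z _ => ?_
  rw [sum_boole, ← card_fiber_ne_majT_div]
  rfl

lemma dist01_majT_le : dist01 f (majT f T) ≤ 2 * varNT f T := by
  have hsum := sum_dist01_fRes f (majT f T) T (majT_combine f T)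
  rw [sum_dist01_fRes_majT] at hsum
  rw [varNT, mul_div_assoc', le_div_iff₀ (by positivity), mul_comm, ← hsum, mul_sum]
  gcongr with z
  linarith [min_le_two_mul_mul_one_sub (pz_nonneg f T z) (pz_le_one f T z)]

end Majority

lemma card_mul_le_sum {ι : Type*} [Fintype ι] {g : ι → ℝ} (hg : ∀ i, 0 ≤ g i) {s : Finset ι}
    {a : ℝ} (ha : ∀ i ∈ s, a ≤ g i) : #s * a ≤ ∑ i, g i :=
  calc #s * a = ∑ _i ∈ s, a := by rw [sum_const, nsmul_eq_mul]
    _ ≤ ∑ i ∈ s, g i := sum_le_sum ha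
    _ ≤ ∑ i, g i := sum_le_sum_of_subset_of_nonneg (subset_univ s) fun i _ _ => hg i

theorem prob_restriction_far_le_general {n : ℕ} (f : (Fin n → Bool) → Bool) (T : Finset (Fin n))
    (ε c : ℝ) (hε : 0 < ε) (hc1 : c < 1 / 8)
    (hvar : varNT f T ≤ c * ε) :
    ((Finset.univ.filter (fun w : Fin n → Bool =>
        ε / 2 ≤ dist01 (fRes f T w) f)).card : ℝ) / 2 ^ n ≤ 8 * c := by
  have hmaj : dist01 f (majT f T) ≤ 2 * c * ε := by linarith [dist01_majT_le f T]
  have hmaj_small : 2 * c * ε ≤ ε / 4 := by nlinarith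
  have hfar : ∀ w ∈ univ.filter (fun w => ε / 2 ≤ dist01 (fRes f T w) f),
      ε / 4 ≤ dist01 (fRes f T w) (majT f T) := by
    intro w hw
    have htri := dist01_triangle (fRes f T w) (majT f T) f
    rw [dist01_comm (majT f T)] at htri
    linarith [(mem_filter.mp hw).2]
  have hmarkov := card_mul_le_sum (fun w => dist01_nonneg _ _) hfar
  rw [sum_dist01_fRes f (majT f T) T (majT_combine f T)] at hmarkov
  rw [div_le_iff₀ (by positivity)]
  refine le_of_mul_le_mul_right ?_ (by positivity : 0 < ε / 4)
  calc _ ≤ 2 ^ n * dist01 f (majT f T) := hmarkov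
    _ ≤ 2 ^ n * (2 * c * ε) := by gcongr
    _ = 8 * c * 2 ^ n * (ε / 4) := by ring

/-- Claim 2: `Pr_w[distance(f_{T,w}, f) ≥ ε/2] ≤ 8c`. -/
theorem prob_restriction_far_le {n : ℕ} (f : (Fin n → Bool) → Bool) (T : Finset (Fin n))
    (ε c : ℝ) (hε : 0 < ε) (hc0 : 0 < c) (hc1 : c < 1 / 8)
    (hvar : varNT f T ≤ c * ε) :
    ((Finset.univ.filter (fun w : Fin n → Bool =>
        ε / 2 ≤ dist01 (fRes f T w) f)).card : ℝ) / 2 ^ n ≤ 8 * c :=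
  prob_restriction_far_le_general f T ε c hε hc1 hvar
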